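/- arXiv:0905.3872 — 3 statements merged into one kernel-verified Lean document; each statement's English description precedes it below -/
import Mathlib

section
/- A matrix g ∈ GL(2,ℤ) satisfies g₁₁+g₂₁ = 1 and g₁₂+g₂₂ = 1 (i.e. g ∈ G_μ) if and only if there exists n ∈ ℤ with g = gₙ or g = fₙ. In other words, G_μ = G⁺_μ ⊔ G⁻_μ, where G⁺_μ := {gₙ : n ∈ ℤ} and G⁻_μ := {fₙ : n ∈ ℤ}, and these two families are disjoint. -/
open Matrix

/-- The matrix `gₙ = [[1−n, −n],[n, 1+n]]`. -/
def gmat (n : ℤ) : Matrix (Fin 2) (Fin 2) ℤ := !![1 - n, -n; n, 1 + n]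

/-- The matrix `fₙ = [[1−n, 2−n],[n, −1+n]]`. -/
def fmat (n : ℤ) : Matrix (Fin 2) (Fin 2) ℤ := !![1 - n, 2 - n; n, n - 1]

/-- `gₙ` as an element of `GL(2,ℤ)` (its inverse is `g₋ₙ`). -/
def gU (n : ℤ) : Matrix.GeneralLinearGroup (Fin 2) ℤ :=
  ⟨gmat n, gmat (-n),
    by ext i j; fin_cases i <;> fin_cases j <;>
      simp [gmat, Matrix.mul_apply, Fin.sum_univ_two, Matrix.one_apply] <;> ring,
    by ext i j; fin_cases i <;> fin_cases j <;>
      simp [gmat, Matrix.mul_apply, Fin.sum_univ_two, Matrix.one_apply] <;> ring⟩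

/-- `fₙ` as an element of `GL(2,ℤ)` (it is its own inverse). -/
def fU (n : ℤ) : Matrix.GeneralLinearGroup (Fin 2) ℤ :=
  ⟨fmat n, fmat n,
    by ext i j; fin_cases i <;> fin_cases j <;>
      simp [fmat, Matrix.mul_apply, Fin.sum_univ_two, Matrix.one_apply] <;> ring,
    by ext i j; fin_cases i <;> fin_cases j <;>
      simp [fmat, Matrix.mul_apply, Fin.sum_univ_two, Matrix.one_apply] <;> ring⟩

/-- Membership in `G_μ`: both column sums of `g` equal `1`. -/
def memGmu (g : Matrix.GeneralLinearGroup (Fin 2) ℤ) : Prop :=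
  (↑g : Matrix (Fin 2) (Fin 2) ℤ) 0 0 + (↑g : Matrix (Fin 2) (Fin 2) ℤ) 1 0 = 1 ∧
  (↑g : Matrix (Fin 2) (Fin 2) ℤ) 0 1 + (↑g : Matrix (Fin 2) (Fin 2) ℤ) 1 1 = 1

/-! A matrix with column sums `1` is `[[1 - c, 1 - d], [c, d]]`, whose determinant is `d - c`.
Over `ℤ` the determinant is `±1`, so `d = c + 1` (giving `g_c`) or `d = c - 1` (giving `f_c`);
the two families are told apart by their determinants `1` and `-1`. -/

theorem det_of_colSums_eq_one {R : Type*} [CommRing R] {M : Matrix (Fin 2) (Fin 2) R}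
    (h0 : M 0 0 + M 1 0 = 1) (h1 : M 0 1 + M 1 1 = 1) : M.det = M 1 1 - M 1 0 := by
  rw [det_fin_two, eq_sub_of_add_eq h0, eq_sub_of_add_eq h1]
  ring

theorem det_gmat (n : ℤ) : (gmat n).det = 1 := by
  rw [gmat, det_fin_two_of]
  ring

theorem det_fmat (n : ℤ) : (fmat n).det = -1 := by
  rw [fmat, det_fin_two_of]
  ring

theorem det_eq_one_or_neg_one {ι : Type*} [Fintype ι] [DecidableEq ι]
    (g : GeneralLinearGroup ι ℤ) : (g : Matrix ι ι ℤ).det = 1 ∨ (g : Matrix ι ι ℤ).det = -1 :=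
  Int.isUnit_iff.mp (GeneralLinearGroup.det g).isUnit

theorem eq_gmat_of_colSums_eq_one {M : Matrix (Fin 2) (Fin 2) ℤ} (h0 : M 0 0 + M 1 0 = 1)
    (h1 : M 0 1 + M 1 1 = 1) (hdet : M.det = 1) : M = gmat (M 1 0) := by
  rw [det_of_colSums_eq_one h0 h1] at hdet
  ext i j
  fin_cases i <;> fin_cases j <;> simp [gmat] <;> omega

theorem eq_fmat_of_colSums_eq_one {M : Matrix (Fin 2) (Fin 2) ℤ} (h0 : M 0 0 + M 1 0 = 1)
    (h1 : M 0 1 + M 1 1 = 1) (hdet : M.det = -1) : M = fmat (M 1 0) := by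
  rw [det_of_colSums_eq_one h0 h1] at hdet
  ext i j
  fin_cases i <;> fin_cases j <;> simp [fmat] <;> omega

/-- `g ∈ G_μ` iff `g = gₙ` or `g = fₙ` for some `n ∈ ℤ`,
i.e. `G_μ = G⁺_μ ⊔ G⁻_μ`, and the two families are disjoint. -/
theorem Gmu_eq_union_disjoint :
    (∀ g : Matrix.GeneralLinearGroup (Fin 2) ℤ,
      memGmu g ↔
        ((∃ n : ℤ, (↑g : Matrix (Fin 2) (Fin 2) ℤ) = gmat n) ∨
         (∃ n : ℤ, (↑g : Matrix (Fin 2) (Fin 2) ℤ) = fmat n))) ∧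
    (∀ n m : ℤ, gmat n ≠ fmat m) := by
  refine ⟨fun g => ⟨fun ⟨h0, h1⟩ => ?_, ?_⟩, fun n m h => ?_⟩
  · exact (det_eq_one_or_neg_one g).imp (fun hdet => ⟨_, eq_gmat_of_colSums_eq_one h0 h1 hdet⟩)
      (fun hdet => ⟨_, eq_fmat_of_colSums_eq_one h0 h1 hdet⟩)
  · rintro (⟨n, hn⟩ | ⟨n, hn⟩) <;> simp [memGmu, hn, gmat, fmat]
  · have hdet := congrArg det h
    rw [det_gmat, det_fmat] at hdet
    norm_num at hdet
end

section
/- G_μ is exactly the subgroup of GL(2,ℤ) generated by the two matrices f₀ = [[1,2],[0,−1]] and f₁ = [[0,1],[1,0]]: every matrix in GL(2,ℤ) with both column sums equal to 1 is a product of copies of f₀ and f₁, and conversely every such product has both column sums equal to 1. -/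
/-!
Both column sums of `g` equal `1` exactly when the row vector `(1, 1)` is fixed by `v ↦ v g`, so
`G_μ` is a stabilizer subgroup; it contains `f₀` and `f₁`, hence their closure.
Conversely, a matrix with column sums `1` has the form `[[1 - c, 1 - d], [c, d]]`, whose
determinant is `d - c`. So `d = c ± 1`, i.e. `g` is `g_c` or `f_c`, and these lie in the closure
because `g_n = (f₁ f₀)ⁿ` and `f_n = g_n f₀`.
-/

open Matrix

namespace Matrix.GeneralLinearGroup

variable {n R : Type*} [Fintype n] [DecidableEq n] [CommRing R]

def vecMulStabilizer (v : n → R) : Subgroup (GL n R) where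
  carrier := {g | v ᵥ* g.val = v}
  one_mem' := vecMul_one v
  mul_mem' {a b} ha hb := by
    change v ᵥ* (a.val * b.val) = v
    rw [← vecMul_vecMul, ha, hb]
  inv_mem' {g} hg := by
    calc v ᵥ* g⁻¹.val = (v ᵥ* g.val) ᵥ* g⁻¹.val := by rw [hg]
      _ = v := by rw [vecMul_vecMul, ← Units.val_mul, mul_inv_cancel, Units.val_one, vecMul_one]

@[simp]
theorem mem_vecMulStabilizer {v : n → R} {g : GL n R} :
    g ∈ vecMulStabilizer v ↔ v ᵥ* g.val = v :=
  Iff.rfl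

end Matrix.GeneralLinearGroup

open Matrix.GeneralLinearGroup

theorem memGmu_iff_mem_vecMulStabilizer (g : GL (Fin 2) ℤ) :
    memGmu g ↔ g ∈ vecMulStabilizer 1 := by
  simp [memGmu, funext_iff, Fin.forall_fin_two, vecMul, dotProduct, Fin.sum_univ_two]

theorem val_det_eq_one_or_neg_one {n : Type*} [Fintype n] [DecidableEq n] (g : GL n ℤ) :
    g.val.det = 1 ∨ g.val.det = -1 :=
  Int.isUnit_iff.mp (det g).isUnit

theorem gU_add (m n : ℤ) : gU (m + n) = gU m * gU n := by
  ext i j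
  fin_cases i <;> fin_cases j <;> simp [gU, gmat, mul_apply, Fin.sum_univ_two] <;> ring

theorem gU_eq_zpow (n : ℤ) : gU n = gU 1 ^ n := by
  induction n using Int.induction_on with
  | zero => ext i j; fin_cases i <;> fin_cases j <;> simp [gU, gmat]
  | succ k ih => rw [gU_add, ih, _root_.zpow_add_one]
  | pred k ih => rw [_root_.zpow_sub_one, ← ih, eq_mul_inv_iff_mul_eq, ← gU_add, sub_add_cancel]

theorem gU_one_eq_fU_one_mul_fU_zero : gU 1 = fU 1 * fU 0 := by
  ext i j
  fin_cases i <;> fin_cases j <;> simp [gU, gmat, fU, fmat, mul_apply, Fin.sum_univ_two]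

theorem fU_eq_gU_mul_fU_zero (n : ℤ) : fU n = gU n * fU 0 := by
  ext i j
  fin_cases i <;> fin_cases j <;> simp [gU, gmat, fU, fmat, mul_apply, Fin.sum_univ_two] <;> ring

theorem eq_gU_or_eq_fU_of_memGmu {g : GL (Fin 2) ℤ} (hg : memGmu g) :
    g = gU (g 1 0) ∨ g = fU (g 1 0) := by
  obtain ⟨h0, h1⟩ := hg
  have hdet : g.val.det = g 1 1 - g 1 0 := by
    rw [det_fin_two]; change g 0 0 * g 1 1 - g 0 1 * g 1 0 = _
    linear_combination g 1 1 * h0 - g 1 0 * h1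
  rcases val_det_eq_one_or_neg_one g with hd | hd
  · left
    ext i j
    fin_cases i <;> fin_cases j <;> simp [gU, gmat] <;> omega
  · right
    ext i j
    fin_cases i <;> fin_cases j <;> simp [fU, fmat] <;> omega

theorem gU_mem_closure (n : ℤ) : gU n ∈ Subgroup.closure ({fU 0, fU 1} : Set (GL (Fin 2) ℤ)) := by
  have hf₀ : fU 0 ∈ Subgroup.closure ({fU 0, fU 1} : Set (GL (Fin 2) ℤ)) :=
    Subgroup.subset_closure (by simp)
  have hf₁ : fU 1 ∈ Subgroup.closure ({fU 0, fU 1} : Set (GL (Fin 2) ℤ)) :=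
    Subgroup.subset_closure (by simp)
  rw [gU_eq_zpow, gU_one_eq_fU_one_mul_fU_zero]
  exact zpow_mem (mul_mem hf₁ hf₀) n

theorem fU_mem_closure (n : ℤ) : fU n ∈ Subgroup.closure ({fU 0, fU 1} : Set (GL (Fin 2) ℤ)) := by
  rw [fU_eq_gU_mul_fU_zero n]
  exact mul_mem (gU_mem_closure n) (Subgroup.subset_closure (Set.mem_insert _ _))

theorem fU_mem_vecMulStabilizer_one (n : ℤ) : fU n ∈ vecMulStabilizer 1 := by
  ext j; fin_cases j <;> simp [fU, fmat, vecMul, dotProduct, Fin.sum_univ_two]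

/-- `G_μ` is exactly the subgroup of `GL(2,ℤ)` generated by
`f₀ = [[1,2],[0,−1]]` and `f₁ = [[0,1],[1,0]]`. -/
theorem Gmu_eq_closure_f0_f1 (g : Matrix.GeneralLinearGroup (Fin 2) ℤ) :
    g ∈ Subgroup.closure ({fU 0, fU 1} : Set (Matrix.GeneralLinearGroup (Fin 2) ℤ)) ↔
      memGmu g := by
  constructor
  · intro hg
    rw [memGmu_iff_mem_vecMulStabilizer]
    refine (Subgroup.closure_le _).mpr ?_ hg
    rintro _ (rfl | rfl) <;> exact fU_mem_vecMulStabilizer_one _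
  · intro hg
    rcases eq_gU_or_eq_fU_of_memGmu hg with hgU | hfU
    · exact hgU ▸ gU_mem_closure _
    · exact hfU ▸ fU_mem_closure _
end

section
/- G_μ is isomorphic to the infinite dihedral group D_∞: the group homomorphism from the free product (ℤ/2ℤ) * (ℤ/2ℤ) to GL(2,ℤ) sending the generator of the first factor to f₀ = [[1,2],[0,−1]] and the generator of the second factor to f₁ = [[0,1],[1,0]] is injective, and its image is exactly G_μ. Equivalently, G_μ (as a group) is isomorphic to the infinite dihedral group (DihedralGroup 0). -/
open Matrix

/-!
The matrices satisfy `gₘ gₙ = g_{m+n}`, `fₘ gₙ = f_{m-n}` and `fₘ fₙ = g_{m-n}`, so `n ↦ gₙ`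
embeds `ℤ` in `GL(2,ℤ)` and `f₀` is an involution inverting it by conjugation. This gives an
injective homomorphism `D_∞ → GL(2,ℤ)`, `r i ↦ g₋ᵢ`, `sr i ↦ fᵢ`. Its image is `G_μ`: once both
column sums are `1`, the determinant of `g` reduces to `g₁₁ - g₁₂`, and its two possible values
`±1` single out `g = gₙ` or `g = fₙ` with `n = g₂₁`. Finally `D_∞` is the free product of the two
groups of order two generated by the reflections `sr 0` and `sr 1`, which are sent to `f₀`, `f₁`.
-/

section

variable {H : Type*} [Group H] {n : ℕ}

def zmodPowersHom (x : H) (hx : x ^ n = 1) : Multiplicative (ZMod n) →* H :=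
  AddMonoidHom.toMultiplicativeLeft <|
    ZMod.lift n ⟨zmultiplesHom (Additive H) (Additive.ofMul x), by simp [← ofMul_pow, hx]⟩

@[simp]
lemma zmodPowersHom_ofAdd_intCast (x : H) (hx : x ^ n = 1) (k : ℤ) :
    zmodPowersHom x hx (.ofAdd (k : ZMod n)) = x ^ k := by
  simp [zmodPowersHom]

lemma zmodPowersHom_ofAdd_one (x : H) (hx : x ^ n = 1) : zmodPowersHom x hx (.ofAdd 1) = x := by
  simpa using zmodPowersHom_ofAdd_intCast x hx 1

lemma MonoidHom.ext_mzmod {f g : Multiplicative (ZMod n) →* H}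
    (h : f (.ofAdd 1) = g (.ofAdd 1)) : f = g := by
  ext x
  obtain ⟨k, hk⟩ := ZMod.intCast_surjective x
  have hx : Multiplicative.ofAdd x = .ofAdd 1 ^ k := by
    rw [← hk, ← ofAdd_zsmul, zsmul_one]
  simp [hx, h]

lemma mul_zmodPowersHom_mul_eq_inv {s x : H} (hs : s * s = 1) (hx : x ^ n = 1)
    (hsx : s * x * s = x⁻¹) (i : ZMod n) :
    s * zmodPowersHom x hx (.ofAdd i) * s = (zmodPowersHom x hx (.ofAdd i))⁻¹ := by
  obtain ⟨k, rfl⟩ := ZMod.intCast_surjective i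
  have hs' : s⁻¹ = s := inv_eq_of_mul_eq_one_right hs
  rw [zmodPowersHom_ofAdd_intCast]
  nth_rewrite 2 [← hs']
  rw [← conj_zpow, hs', hsx, _root_.inv_zpow]

lemma mul_mul_mul_eq_inv_of_mul_self_eq_one {a b : H} (ha : a * a = 1) (hb : b * b = 1) :
    a * (a * b) * a = (a * b)⁻¹ := by
  rw [_root_.mul_inv_rev, inv_eq_of_mul_eq_one_right ha, inv_eq_of_mul_eq_one_right hb,
    ← mul_assoc, ha, one_mul]

namespace DihedralGroup

def lift (s t : H) (hs : s * s = 1) (ht : t ^ n = 1) (hst : s * t * s = t⁻¹) :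
    DihedralGroup n →* H where
  toFun
    | r i => zmodPowersHom t ht (.ofAdd i)
    | sr i => s * zmodPowersHom t ht (.ofAdd i)
  map_one' := by rw [one_def]; exact map_one _
  map_mul' u v := by
    have key := mul_zmodPowersHom_mul_eq_inv hs ht hst
    rcases u with i | i <;> rcases v with j | j <;>
      simp only [r_mul_r, r_mul_sr, sr_mul_r, sr_mul_sr, sub_eq_neg_add, ofAdd_add, ofAdd_neg,
        map_mul, map_inv, ← key, ← mul_assoc, hs, one_mul]

@[simp]
lemma lift_r (s t : H) (hs : s * s = 1) (ht : t ^ n = 1) (hst : s * t * s = t⁻¹) (i : ZMod n) :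
    lift s t hs ht hst (r i) = zmodPowersHom t ht (.ofAdd i) := rfl

@[simp]
lemma lift_sr (s t : H) (hs : s * s = 1) (ht : t ^ n = 1) (hst : s * t * s = t⁻¹) (i : ZMod n) :
    lift s t hs ht hst (sr i) = s * zmodPowersHom t ht (.ofAdd i) := rfl

lemma hom_ext {f g : DihedralGroup n →* H} (h₁ : f (r 1) = g (r 1)) (h₂ : f (sr 0) = g (sr 0)) :
    f = g := by
  have hr : ∀ i, f (r i) = g (r i) := by
    intro i
    obtain ⟨k, rfl⟩ := ZMod.intCast_surjective i
    rw [← r_one_zpow, map_zpow, map_zpow, h₁]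
  ext (i | i)
  · exact hr i
  · rw [← zero_add i, ← sr_mul_r, map_mul, map_mul, h₂, hr]

end DihedralGroup

end

section Coprod

open Monoid.Coprod DihedralGroup

local notation "C₂" => Multiplicative (ZMod 2)

lemma ofAdd_one_mul_self_zmod_two : (.ofAdd 1 * .ofAdd 1 : C₂) = 1 := by decide

lemma inl_ofAdd_one_mul_self : (inl (.ofAdd 1) * inl (.ofAdd 1) : Monoid.Coprod C₂ C₂) = 1 := by
  rw [← map_mul, ofAdd_one_mul_self_zmod_two, map_one]

lemma inr_ofAdd_one_mul_self : (inr (.ofAdd 1) * inr (.ofAdd 1) : Monoid.Coprod C₂ C₂) = 1 := by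
  rw [← map_mul, ofAdd_one_mul_self_zmod_two, map_one]

def DihedralGroup.coprodZModTwoMulEquiv : Monoid.Coprod C₂ C₂ ≃* DihedralGroup 0 :=
  MonoidHom.toMulEquiv
    (Monoid.Coprod.lift (zmodPowersHom (sr 0 : DihedralGroup 0) (by rw [sq, sr_mul_self]))
      (zmodPowersHom (sr 1 : DihedralGroup 0) (by rw [sq, sr_mul_self])))
    (DihedralGroup.lift (inl (.ofAdd 1)) (inl (.ofAdd 1) * inr (.ofAdd 1))
      inl_ofAdd_one_mul_self (pow_zero _)
      (mul_mul_mul_eq_inv_of_mul_self_eq_one inl_ofAdd_one_mul_self inr_ofAdd_one_mul_self))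
    (by
      refine Monoid.Coprod.hom_ext (MonoidHom.ext_mzmod ?_) (MonoidHom.ext_mzmod ?_) <;>
        simp only [MonoidHom.comp_apply, MonoidHom.id_apply, lift_apply_inl,
          lift_apply_inr] <;>
        -- `erw`: the numeral `1 : ZMod 2` here is elaborated through the field instance
        erw [zmodPowersHom_ofAdd_one] <;> rw [lift_sr]
      · simp only [ofAdd_zero, map_one, mul_one]
      · erw [zmodPowersHom_ofAdd_one]
        rw [← mul_assoc, inl_ofAdd_one_mul_self, one_mul])
    (by
      refine DihedralGroup.hom_ext ?_ ?_ <;>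
        simp only [MonoidHom.comp_apply, MonoidHom.id_apply, lift_r, lift_sr]
      · rw [zmodPowersHom_ofAdd_one, map_mul, lift_apply_inl, lift_apply_inr]
        erw [zmodPowersHom_ofAdd_one, zmodPowersHom_ofAdd_one]
        rw [sr_mul_sr, sub_zero]
      · simp only [ofAdd_zero, map_one, mul_one, lift_apply_inl]
        erw [zmodPowersHom_ofAdd_one])

@[simp]
lemma DihedralGroup.coprodZModTwoMulEquiv_inl : coprodZModTwoMulEquiv (inl (.ofAdd 1)) = sr 0 := by
  simp only [coprodZModTwoMulEquiv, MonoidHom.toMulEquiv_apply,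
    Monoid.Coprod.lift_apply_inl]
  exact zmodPowersHom_ofAdd_one _ _

@[simp]
lemma DihedralGroup.coprodZModTwoMulEquiv_inr : coprodZModTwoMulEquiv (inr (.ofAdd 1)) = sr 1 := by
  simp only [coprodZModTwoMulEquiv, MonoidHom.toMulEquiv_apply,
    Monoid.Coprod.lift_apply_inr]
  exact zmodPowersHom_ofAdd_one _ _

end Coprod

section Gmu

open DihedralGroup

lemma gU_mul_gU (m n : ℤ) : gU m * gU n = gU (m + n) := by
  ext i j; fin_cases i <;> fin_cases j <;> simp [gU, gmat, Matrix.mul_apply] <;> ring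

lemma fU_mul_gU (m n : ℤ) : fU m * gU n = fU (m - n) := by
  ext i j; fin_cases i <;> fin_cases j <;> simp [gU, fU, gmat, fmat, Matrix.mul_apply] <;> ring

lemma fU_mul_fU (m n : ℤ) : fU m * fU n = gU (m - n) := by
  ext i j; fin_cases i <;> fin_cases j <;> simp [gU, fU, gmat, fmat, Matrix.mul_apply] <;> ring

lemma gU_zero : gU 0 = 1 := by
  ext i j; fin_cases i <;> fin_cases j <;> simp [gU, gmat]

lemma gU_inv (n : ℤ) : (gU n)⁻¹ = gU (-n) :=
  inv_eq_of_mul_eq_one_right (by rw [gU_mul_gU, add_neg_cancel, gU_zero])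

lemma gU_zpow (m k : ℤ) : gU m ^ k = gU (m * k) := by
  induction k using Int.induction_on with
  | zero => rw [zpow_zero, mul_zero, gU_zero]
  | succ k ih => rw [_root_.zpow_add_one, ih, gU_mul_gU]; ring_nf
  | pred k ih => rw [_root_.zpow_sub_one, ih, gU_inv, gU_mul_gU]; ring_nf

lemma gU_injective : Function.Injective gU := fun m n h => by
  simpa [gU, gmat] using
    congr_arg (fun g : GL (Fin 2) ℤ => (g : Matrix (Fin 2) (Fin 2) ℤ) 1 0) h

lemma fU_ne_one (n : ℤ) : fU n ≠ 1 := fun h => by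
  have h10 := congr_arg (fun g : GL (Fin 2) ℤ => (g : Matrix (Fin 2) (Fin 2) ℤ) 1 0) h
  have h01 := congr_arg (fun g : GL (Fin 2) ℤ => (g : Matrix (Fin 2) (Fin 2) ℤ) 0 1) h
  simp [fU, fmat] at h10 h01
  omega

lemma fU_zero_mul_self : fU 0 * fU 0 = 1 := by
  rw [fU_mul_fU, sub_self, gU_zero]

lemma fU_zero_mul_gU_mul_fU_zero (n : ℤ) : fU 0 * gU n * fU 0 = (gU n)⁻¹ := by
  rw [fU_mul_gU, fU_mul_fU, gU_inv]
  ring_nf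

lemma memGmu_gU (n : ℤ) : memGmu (gU n) := by
  constructor <;> simp [gU, gmat]

lemma memGmu_fU (n : ℤ) : memGmu (fU n) := by
  constructor <;> simp [fU, fmat]

lemma det_eq_of_memGmu {g : GL (Fin 2) ℤ} (hg : memGmu g) :
    (g : Matrix (Fin 2) (Fin 2) ℤ).det = g 0 0 - g 0 1 := by
  obtain ⟨h0, h1⟩ := hg
  rw [Matrix.det_fin_two, ← sub_eq_of_eq_add' h0.symm, ← sub_eq_of_eq_add' h1.symm]
  ring

lemma memGmu_iff (g : GL (Fin 2) ℤ) : memGmu g ↔ (∃ n, gU n = g) ∨ ∃ n, fU n = g := by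
  refine ⟨fun hg => ?_, ?_⟩
  · have hdet := det_eq_of_memGmu hg
    obtain ⟨h0, h1⟩ := hg
    rcases Int.isUnit_iff.mp (Matrix.GeneralLinearGroup.det g).isUnit with h | h <;>
      rw [Matrix.GeneralLinearGroup.val_det_apply, hdet] at h
    · refine .inl ⟨g 1 0, ?_⟩
      ext i j; fin_cases i <;> fin_cases j <;> simp [gU, gmat] <;> omega
    · refine .inr ⟨g 1 0, ?_⟩
      ext i j; fin_cases i <;> fin_cases j <;> simp [fU, fmat] <;> omega
  · rintro (⟨n, rfl⟩ | ⟨n, rfl⟩)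
    exacts [memGmu_gU n, memGmu_fU n]

def gmuHom : DihedralGroup 0 →* GL (Fin 2) ℤ :=
  DihedralGroup.lift (fU 0) (gU (-1)) fU_zero_mul_self (pow_zero _)
    (fU_zero_mul_gU_mul_fU_zero (-1))

-- `Int.cast` is spelled out: `ZMod 0` unfolds to `ℤ`, so `(k : ZMod 0)` would insert no cast.
lemma gmuHom_r (k : ℤ) : gmuHom (r (Int.cast k)) = gU (-k) := by
  rw [gmuHom, lift_r, zmodPowersHom_ofAdd_intCast, gU_zpow, neg_one_mul]

lemma gmuHom_sr (k : ℤ) : gmuHom (sr (Int.cast k)) = fU k := by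
  rw [gmuHom, lift_sr, zmodPowersHom_ofAdd_intCast, gU_zpow, fU_mul_gU, neg_one_mul, zero_sub,
    neg_neg]

lemma gmuHom_injective : Function.Injective gmuHom := by
  rw [injective_iff_map_eq_one]
  rintro (i | i) h <;> obtain ⟨k, rfl⟩ := ZMod.intCast_surjective i
  · rw [gmuHom_r, ← gU_zero] at h
    rw [neg_eq_zero.mp (gU_injective h), Int.cast_zero, r_zero]
  · exact absurd (gmuHom_sr k ▸ h) (fU_ne_one k)

lemma mem_range_gmuHom_iff (g : GL (Fin 2) ℤ) : g ∈ gmuHom.range ↔ memGmu g := by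
  rw [memGmu_iff]
  constructor
  · rintro ⟨i | i, rfl⟩ <;> obtain ⟨k, rfl⟩ := ZMod.intCast_surjective i
    exacts [.inl ⟨_, (gmuHom_r k).symm⟩, .inr ⟨_, (gmuHom_sr k).symm⟩]
  · rintro (⟨n, rfl⟩ | ⟨n, rfl⟩)
    exacts [⟨r (Int.cast (-n)), by rw [gmuHom_r, neg_neg]⟩, ⟨sr (Int.cast n), gmuHom_sr n⟩]

end Gmu

/-- `G_μ ≅ D_∞`.  The homomorphism from the free product
`(ℤ/2ℤ) * (ℤ/2ℤ)` to `GL(2,ℤ)` sending the generator of the first factor to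
`f₀ = [[1,2],[0,−1]]` and the generator of the second factor to `f₁ = [[0,1],[1,0]]`
is injective with image exactly `G_μ`; equivalently, there is an injective
homomorphism from the infinite dihedral group `DihedralGroup 0` to `GL(2,ℤ)` with
image exactly `G_μ`. -/
theorem Gmu_iso_infinite_dihedral :
    (∃ φ : Monoid.Coprod (Multiplicative (ZMod 2)) (Multiplicative (ZMod 2)) →*
        Matrix.GeneralLinearGroup (Fin 2) ℤ,
      φ (Monoid.Coprod.inl (Multiplicative.ofAdd (1 : ZMod 2))) = fU 0 ∧
      φ (Monoid.Coprod.inr (Multiplicative.ofAdd (1 : ZMod 2))) = fU 1 ∧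
      Function.Injective φ ∧
      (∀ g : Matrix.GeneralLinearGroup (Fin 2) ℤ, g ∈ φ.range ↔ memGmu g)) ∧
    (∃ ψ : DihedralGroup 0 →* Matrix.GeneralLinearGroup (Fin 2) ℤ,
      Function.Injective ψ ∧
      (∀ g : Matrix.GeneralLinearGroup (Fin 2) ℤ, g ∈ ψ.range ↔ memGmu g)) := by
  let e := DihedralGroup.coprodZModTwoMulEquiv
  refine ⟨⟨gmuHom.comp e.toMonoidHom, ?_, ?_, gmuHom_injective.comp e.injective, fun g => ?_⟩,
    gmuHom, gmuHom_injective, mem_range_gmuHom_iff⟩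
  · simpa [e] using gmuHom_sr 0
  · simpa [e] using gmuHom_sr 1
  · rw [MonoidHom.range_comp, MonoidHom.range_eq_top_of_surjective e.toMonoidHom e.surjective,
      ← MonoidHom.range_eq_map, mem_range_gmuHom_iff]
end
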